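/- arXiv:1810.01691 — 6 statements merged into one kernel-verified Lean document; each statement's English description precedes it below -/
import Mathlib

section
/- Let (P_n) and (Q_n) be sequences of monic polynomials related by P_n + Σ_{i=1}^N r_{i,n} P_{n-i} = Q_n + Σ_{i=1}^M s_{i,n} Q_{n-i} for all n ≥ 0, and suppose (Q_n) is orthogonal with respect to the linear functional v. For n ≥ N-1 let B_n be the N×N matrix with (j,k) entry ⟨Q̄_{N-k} v, P_{n-j+1}⟩ (rows indexed by P_n, …, P_{n-(N-1)}, columns by Q̄_{N-1}, …, Q̄_0, where Q̄_i = Q_i/⟨v, Q_i²⟩). Then det B_n = (-1)^N r_{N,n} · det B_{n-1} for all n ≥ M+N. -/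
/-!
Pairing the relation between `P n` and `Q n` with `Q k` for `k < N` kills its whole right-hand
side by orthogonality once `n ≥ M + N`. Hence the first row of `B n` is the combination
`-∑ r (i+1) n • (row i of B (n-1))`, while the other rows of `B n` are the first `N - 1` rows of
`B (n-1)`. By linearity in the first row only the term of the last row of `B (n-1)` survives,
with coefficient `-r N n`, and moving that row back into place is a cyclic permutation of sign
`(-1)^(N-1)`.
-/

open Finset Matrix

theorem sum_Icc_one_eq_sum_fin {M : Type*} [AddCommMonoid M] (f : ℕ → M) (N : ℕ) :
    ∑ i ∈ Icc 1 N, f i = ∑ i : Fin N, f (i + 1) := by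
  rw [Fin.sum_univ_eq_sum_range (fun i => f (i + 1)), range_eq_Ico, sum_Ico_add',
    Ico_add_one_right_eq_Icc, zero_add]

theorem Matrix.det_of_cons_sum_smul_castSucc {R : Type*} [CommRing R] {n : ℕ}
    (A : Matrix (Fin (n + 1)) (Fin (n + 1)) R) (c : Fin (n + 1) → R) :
    (of (Fin.cons (∑ i, c i • A i) fun j : Fin n => A j.castSucc)).det
      = (-1) ^ n * c (Fin.last n) * A.det := by
  set A' : Matrix (Fin (n + 1)) (Fin (n + 1)) R :=
    of (Fin.cons (A (Fin.last n)) fun j => A j.castSucc)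
  set c' : Fin (n + 1) → R := Fin.cons (c (Fin.last n)) fun j => c j.castSucc
  have hrotate : A = A'.submatrix (finRotate (n + 1)) id := by
    conv_lhs => rw [← Fin.snoc_init_self A, Fin.snoc_eq_cons_rotate]
    rfl
  have hdet : A.det = (-1) ^ n * A'.det := by
    conv_lhs => rw [hrotate]
    rw [det_permute, sign_finRotate]
    simp
  have hsum : ∑ i, c i • A i = ∑ i, c' i • A' i := by
    rw [Fin.sum_univ_castSucc, Fin.sum_univ_succ, add_comm (∑ j : Fin n, _)]
    rfl
  have hupdate : of (Fin.cons (∑ i, c i • A i) fun j : Fin n => A j.castSucc)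
      = A'.updateRow 0 (∑ i, c' i • A' i) := by
    rw [← hsum]
    ext i k
    cases i using Fin.cases <;> simp [A']
  have hsign : ((-1 : R) ^ n) * (-1) ^ n = 1 := by rw [← mul_pow]; simp
  rw [hupdate, det_updateRow_sum, hdet, show c' 0 = c (Fin.last n) from rfl, smul_eq_mul]
  linear_combination (-(c (Fin.last n) * A'.det)) * hsign

theorem apply_mul_eq_neg_sum_of_orthogonal {R A : Type*} [CommRing R] [Ring A] [Algebra R A]
    (v : A →ₗ[R] R) {P Q : ℕ → A} {N M n : ℕ} {r s : ℕ → R}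
    (horth : ∀ m n, m ≠ n → v (Q m * Q n) = 0)
    (hrel : P n + ∑ i ∈ Icc 1 N, r i • P (n - i) = Q n + ∑ i ∈ Icc 1 M, s i • Q (n - i))
    {k : ℕ} (hk : k + M < n) :
    v (Q k * P n) = -∑ i ∈ Icc 1 N, r i * v (Q k * P (n - i)) := by
  have hpair := congrArg (fun p => v (Q k * p)) hrel
  simp only [mul_add, mul_sum, mul_smul_comm, map_add, map_sum, map_smul, smul_eq_mul] at hpair
  have hQ : ∑ i ∈ Icc 1 M, s i * v (Q k * Q (n - i)) = 0 :=
    sum_eq_zero fun i hi => by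
      rw [mem_Icc] at hi
      rw [horth k (n - i) (by omega), mul_zero]
  rw [horth k n (by omega), hQ, add_zero] at hpair
  exact eq_neg_of_add_eq_zero_left hpair

theorem det_Bn_recursion_general
    (N M : ℕ) (hN : 1 ≤ N)
    (v : Polynomial ℂ →ₗ[ℂ] ℂ)
    (P Q : ℕ → Polynomial ℂ) (r s : ℕ → ℕ → ℂ)
    (horth : ∀ m n, m ≠ n → v (Q m * Q n) = 0)
    (hrel : ∀ n, P n + ∑ i ∈ Finset.Icc 1 N, r i n • P (n - i)
        = Q n + ∑ i ∈ Finset.Icc 1 M, s i n • Q (n - i))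
    (B : ℕ → Matrix (Fin N) (Fin N) ℂ)
    (hB : ∀ n, ∀ j k : Fin N, B n j k
        = v (Q (N - 1 - (k : ℕ)) * P (n - (j : ℕ))) / v (Q (N - 1 - (k : ℕ)) ^ 2)) :
    ∀ n, M + N ≤ n → (B n).det = (-1) ^ N * r N n * (B (n - 1)).det := by
  obtain ⟨N, rfl⟩ : ∃ N', N = N' + 1 := ⟨N - 1, by omega⟩
  intro n hn
  have hrow_zero : B n 0 = ∑ i : Fin (N + 1), (-r ((i : ℕ) + 1) n) • B (n - 1) i := by
    ext k
    rw [hB, Finset.sum_apply, Fin.val_zero, Nat.sub_zero,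
      apply_mul_eq_neg_sum_of_orthogonal v horth (hrel n) (by omega), sum_Icc_one_eq_sum_fin,
      neg_div, sum_div, ← sum_neg_distrib]
    refine sum_congr rfl fun i _ => ?_
    rw [Pi.smul_apply, smul_eq_mul, hB, Nat.sub_sub n 1, add_comm 1]
    ring
  have hrow_succ (j : Fin N) : B n j.succ = B (n - 1) j.castSucc := by
    ext k
    rw [hB, hB, Fin.val_succ, Fin.val_castSucc, Nat.sub_sub n 1, add_comm 1]
  have hBn : B n = of (Fin.cons (∑ i : Fin (N + 1), (-r ((i : ℕ) + 1) n) • B (n - 1) i)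
      fun j => B (n - 1) j.castSucc) := by
    ext j : 1
    cases j using Fin.cases <;> simp [hrow_zero, hrow_succ]
  rw [hBn, det_of_cons_sum_smul_castSucc, Fin.val_last, pow_succ]
  ring

/-- Lemma 2.1 (a): determinant recursion for the matrices `B_n` when `(Q n)` is
orthogonal with respect to `v`. -/
theorem det_Bn_recursion
    (N M : ℕ) (hN : 1 ≤ N)
    (v : Polynomial ℂ →ₗ[ℂ] ℂ)
    (P Q : ℕ → Polynomial ℂ) (r s : ℕ → ℕ → ℂ)
    (hPmonic : ∀ n, (P n).Monic) (hPdeg : ∀ n, (P n).degree = n)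
    (hQmonic : ∀ n, (Q n).Monic) (hQdeg : ∀ n, (Q n).degree = n)
    (horth : ∀ m n, m ≠ n → v (Q m * Q n) = 0)
    (hreg : ∀ n, v (Q n ^ 2) ≠ 0)
    (hrz : ∀ i n, n < i → r i n = 0) (hsz : ∀ i n, n < i → s i n = 0)
    (hrel : ∀ n, P n + ∑ i ∈ Finset.Icc 1 N, r i n • P (n - i)
        = Q n + ∑ i ∈ Finset.Icc 1 M, s i n • Q (n - i))
    (B : ℕ → Matrix (Fin N) (Fin N) ℂ)
    (hB : ∀ n, ∀ j k : Fin N, B n j k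
        = v (Q (N - 1 - (k : ℕ)) * P (n - (j : ℕ))) / v (Q (N - 1 - (k : ℕ)) ^ 2)) :
    ∀ n, M + N ≤ n → (B n).det = (-1) ^ N * r N n * (B (n - 1)).det :=
  det_Bn_recursion_general N M hN v P Q r s horth hrel B hB
end

section
/- Let (P_n) and (Q_n) be monic orthogonal polynomial sequences with respect to u and v, related by P_n + Σ_{i=1}^N r_{i,n} P_{n-i} = Q_n + Σ_{i=1}^M s_{i,n} Q_{n-i}, with a relation Φ_M u = Ψ_N v between the functionals (Φ_M, Ψ_N of exact degrees M, N). Then for every n ≥ N+M, the identity (s_{M,N+M}/⟨u,P_M²⟩) · r_{N,n} · ⟨u, P_{n-N}²⟩ = (r_{N,N+M}/⟨v,Q_N²⟩) · s_{M,n} · ⟨v, Q_{n-M}²⟩ holds, where Ψ_N = r_{N,M+N} Q̄_N + Σ_{i=0}^{N-1} λ_i Q̄_i and Φ_M = s_{M,M+N} P̄_M + Σ_{i=0}^{M-1} μ_i P̄_i with Q̄_i = Q_i/⟨v,Q_i²⟩, P̄_i = P_i/⟨u,P_i²⟩. -/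
/-!
Pair both sides of `Φ u = Ψ v` with `R_n Q_{n-N-M}`, where `R_n` is the common polynomial.
Against `u`, expand `R_n` in the `P`-basis: `Φ Q_{n-N-M}` has degree at most `n - N`, so
orthogonality kills every term except `r_{N,n} P_{n-N}`, which pairs to `r_{N,n}` times the
coefficient of `X^{n-N}` in `Φ Q_{n-N-M}` (the leading coefficient `s_{M,M+N}/⟨u,P_M²⟩` of `Φ`)
times `⟨u,P_{n-N}²⟩`. Against `v`, expand `R_n` in the `Q`-basis and argue symmetrically.
-/

open Polynomial Finset

namespace Polynomial

variable {R : Type*} [CommRing R] {P : ℕ → R[X]}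

theorem Monic.coeff_of_degree_eq {p : R[X]} (hp : p.Monic) {k : ℕ} (hk : p.degree = k) :
    p.coeff k = 1 :=
  natDegree_eq_of_degree_eq_some hk ▸ hp.coeff_natDegree

theorem sum_smul_mem_degreeLT (hP : ∀ i, (P i).degree = i) (d : ℕ → R) (m : ℕ) :
    ∑ i ∈ range m, d i • P i ∈ degreeLT R m :=
  Submodule.sum_mem _ fun i hi =>
    Submodule.smul_mem _ _ (mem_degreeLT.2 (by simpa [hP] using mem_range.1 hi))

theorem natDegree_smul_add_sum_smul_le (hP : ∀ i, (P i).degree = i) (a : R) (d : ℕ → R)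
    (m : ℕ) : (a • P m + ∑ i ∈ range m, d i • P i).natDegree ≤ m := by
  refine natDegree_add_le_of_degree_le ((natDegree_smul_le _ _).trans ?_) ?_
  · exact (natDegree_eq_of_degree_eq_some (hP m)).le
  · exact natDegree_le_of_degree_le (mem_degreeLT.1 (sum_smul_mem_degreeLT hP d m)).le

theorem coeff_smul_add_sum_smul (hP : ∀ i, (P i).degree = i) {m : ℕ} (hPm : (P m).Monic)
    (a : R) (d : ℕ → R) : (a • P m + ∑ i ∈ range m, d i • P i).coeff m = a := by
  rw [coeff_add, coeff_smul, hPm.coeff_of_degree_eq (hP m),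
    coeff_eq_zero_of_degree_lt (mem_degreeLT.1 (sum_smul_mem_degreeLT hP d m)), smul_eq_mul,
    mul_one, add_zero]

end Polynomial

structure IsMonicOrthogonal {R : Type*} [CommRing R] (u : R[X] →ₗ[R] R) (P : ℕ → R[X]) :
    Prop where
  monic : ∀ n, (P n).Monic
  degree_eq : ∀ n, (P n).degree = n
  orthogonal : ∀ m n, m ≠ n → u (P m * P n) = 0

namespace IsMonicOrthogonal

variable {R : Type*} [CommRing R] {u : R[X] →ₗ[R] R} {P : ℕ → R[X]}

theorem apply_mul_eq_zero_of_degree_lt (hP : IsMonicOrthogonal u P) {k : ℕ} {q : R[X]}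
    (hq : q.degree < k) : u (P k * q) = 0 := by
  have hspan : Submodule.span R (P '' Set.Iio k) = degreeLT R k :=
    Sequence.span_degreeLT ⟨P, hP.degree_eq⟩ fun i _ => (hP.monic i).leadingCoeff ▸ isUnit_one
  have hker :
      Submodule.span R (P '' Set.Iio k) ≤ LinearMap.ker (u ∘ₗ LinearMap.mulLeft R (P k)) :=
    Submodule.span_le.2 <| by
      rintro _ ⟨i, hi, rfl⟩
      exact hP.orthogonal k i (Set.mem_Iio.1 hi).ne'
  exact hker (hspan ▸ mem_degreeLT.2 hq)

theorem apply_mul_eq_coeff_mul (hP : IsMonicOrthogonal u P) {k : ℕ} {q : R[X]}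
    (hq : q.degree ≤ k) : u (P k * q) = q.coeff k * u (P k ^ 2) := by
  have hlow : (q - C (q.coeff k) * P k).degree < k := by
    rw [degree_lt_iff_coeff_zero]
    intro m hm
    rcases hm.lt_or_eq with hm | rfl
    · rw [coeff_sub, coeff_C_mul, coeff_eq_zero_of_degree_lt (hq.trans_lt (by exact_mod_cast hm)),
        coeff_eq_zero_of_degree_lt ((hP.degree_eq k).trans_lt (by exact_mod_cast hm)), mul_zero,
        sub_zero]
    · rw [coeff_sub, coeff_C_mul, (hP.monic k).coeff_of_degree_eq (hP.degree_eq k), mul_one, sub_self]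
  have h := hP.apply_mul_eq_zero_of_degree_lt hlow
  rw [mul_sub, map_sub, sub_eq_zero, mul_left_comm, ← smul_eq_C_mul, map_smul, smul_eq_mul] at h
  rw [h, sq]

theorem apply_add_sum_mul_eq (hP : IsMonicOrthogonal u P) {N n : ℕ} (hN : 1 ≤ N) (hNn : N ≤ n)
    (r : ℕ → R) {w : R[X]} (hw : w.degree ≤ (n - N : ℕ)) :
    u ((P n + ∑ j ∈ Icc 1 N, r j • P (n - j)) * w)
      = r N * w.coeff (n - N) * u (P (n - N) ^ 2) := by
  have hlt : ∀ j < N, u (P (n - j) * w) = 0 := fun j hj =>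
    hP.apply_mul_eq_zero_of_degree_lt (hw.trans_lt (by exact_mod_cast (by omega : n - N < n - j)))
  rw [add_mul, sum_mul, map_add, map_sum, (by simpa using hlt 0 hN : u (P n * w) = 0), zero_add,
    sum_eq_single_of_mem N (mem_Icc.2 ⟨hN, le_rfl⟩)]
  · rw [smul_mul_assoc, map_smul, hP.apply_mul_eq_coeff_mul hw, smul_eq_mul, mul_assoc]
  · intro j hj hjN
    rw [smul_mul_assoc, map_smul, hlt j (by grind), smul_zero]

theorem apply_mul_add_sum_mul_eq (hP : IsMonicOrthogonal u P) {N M n : ℕ} (hN : 1 ≤ N)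
    (hn : N + M ≤ n) (r : ℕ → R) {Φ w : R[X]} (hΦ : Φ.natDegree ≤ M) (hw : w.Monic)
    (hwdeg : w.natDegree = n - (N + M)) :
    u (Φ * ((P n + ∑ j ∈ Icc 1 N, r j • P (n - j)) * w))
      = Φ.coeff M * r N * u (P (n - N) ^ 2) := by
  have hdeg : (Φ * w).natDegree ≤ M + (n - (N + M)) := natDegree_mul_le_of_le hΦ hwdeg.le
  have hcoeff : (Φ * w).coeff (M + (n - (N + M))) = Φ.coeff M := by
    rw [coeff_mul_add_eq_of_natDegree_le hΦ hwdeg.le, ← hwdeg, hw.coeff_natDegree, mul_one]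
  rw [show M + (n - (N + M)) = n - N by omega] at hdeg hcoeff
  rw [mul_left_comm, hP.apply_add_sum_mul_eq hN (by omega) r (degree_le_of_natDegree_le hdeg),
    hcoeff, mul_comm (r N)]

end IsMonicOrthogonal

theorem key_identity_general
    (N M : ℕ) (hN : 1 ≤ N) (hM : 1 ≤ M)
    (u v : Polynomial ℂ →ₗ[ℂ] ℂ)
    (P Q : ℕ → Polynomial ℂ) (r s : ℕ → ℕ → ℂ)
    (hPmonic : ∀ n, (P n).Monic) (hPdeg : ∀ n, (P n).degree = n)
    (hQmonic : ∀ n, (Q n).Monic) (hQdeg : ∀ n, (Q n).degree = n)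
    (hPorth : ∀ m n, m ≠ n → u (P m * P n) = 0)
    (hQorth : ∀ m n, m ≠ n → v (Q m * Q n) = 0)
    (hrel : ∀ n, P n + ∑ i ∈ Finset.Icc 1 N, r i n • P (n - i)
        = Q n + ∑ i ∈ Finset.Icc 1 M, s i n • Q (n - i))
    (lam mu : ℕ → ℂ) (Φ Ψ : Polynomial ℂ)
    (hΨdef : Ψ = r N (M + N) • ((v (Q N ^ 2))⁻¹ • Q N)
        + ∑ i ∈ Finset.range N, lam i • ((v (Q i ^ 2))⁻¹ • Q i))
    (hΦdef : Φ = s M (M + N) • ((u (P M ^ 2))⁻¹ • P M)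
        + ∑ i ∈ Finset.range M, mu i • ((u (P i ^ 2))⁻¹ • P i))
    (hfun : ∀ p, u (Φ * p) = v (Ψ * p)) :
    ∀ n, N + M ≤ n →
      s M (N + M) / u (P M ^ 2) * r N n * u (P (n - N) ^ 2)
        = r N (N + M) / v (Q N ^ 2) * s M n * v (Q (n - M) ^ 2) := by
  intro n hn
  have hPu : IsMonicOrthogonal u P := ⟨hPmonic, hPdeg, hPorth⟩
  have hQv : IsMonicOrthogonal v Q := ⟨hQmonic, hQdeg, hQorth⟩
  simp only [smul_smul] at hΦdef hΨdef
  have hΦM : Φ.coeff M = s M (M + N) * (u (P M ^ 2))⁻¹ :=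
    hΦdef ▸ coeff_smul_add_sum_smul hPdeg (hPmonic M) _ _
  have hΨN : Ψ.coeff N = r N (M + N) * (v (Q N ^ 2))⁻¹ :=
    hΨdef ▸ coeff_smul_add_sum_smul hQdeg (hQmonic N) _ _
  have hc : (Q (n - (N + M))).natDegree = n - (N + M) := natDegree_eq_of_degree_eq_some (hQdeg _)
  have hu := hPu.apply_mul_add_sum_mul_eq hN hn (r · n)
    (hΦdef ▸ natDegree_smul_add_sum_smul_le hPdeg _ _ M) (hQmonic _) hc
  have hv := hQv.apply_mul_add_sum_mul_eq (n := n) hM (by omega) (s · n)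
    (hΨdef ▸ natDegree_smul_add_sum_smul_le hQdeg _ _ N) (hQmonic _) (by rw [hc, add_comm])
  have key := hfun ((P n + ∑ i ∈ Icc 1 N, r i n • P (n - i)) * Q (n - (N + M)))
  rw [hu, hrel n, hv, hΦM, hΨN] at key
  rw [add_comm N M, div_eq_mul_inv, div_eq_mul_inv]
  linear_combination key

/-- The key identity relating `r_{N,n}` and `s_{M,n}` obtained by applying the
functional relation `Φ_M u = Ψ_N v` to `R_n · Q_{n-(N+M)}`. -/
theorem key_identity
    (N M : ℕ) (hN : 1 ≤ N) (hM : 1 ≤ M)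
    (u v : Polynomial ℂ →ₗ[ℂ] ℂ)
    (P Q : ℕ → Polynomial ℂ) (r s : ℕ → ℕ → ℂ)
    (hPmonic : ∀ n, (P n).Monic) (hPdeg : ∀ n, (P n).degree = n)
    (hQmonic : ∀ n, (Q n).Monic) (hQdeg : ∀ n, (Q n).degree = n)
    (hPorth : ∀ m n, m ≠ n → u (P m * P n) = 0) (hPreg : ∀ n, u (P n ^ 2) ≠ 0)
    (hQorth : ∀ m n, m ≠ n → v (Q m * Q n) = 0) (hQreg : ∀ n, v (Q n ^ 2) ≠ 0)
    (hrz : ∀ i n, n < i → r i n = 0) (hsz : ∀ i n, n < i → s i n = 0)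
    (hrel : ∀ n, P n + ∑ i ∈ Finset.Icc 1 N, r i n • P (n - i)
        = Q n + ∑ i ∈ Finset.Icc 1 M, s i n • Q (n - i))
    (lam mu : ℕ → ℂ) (Φ Ψ : Polynomial ℂ)
    (hΨdef : Ψ = r N (M + N) • ((v (Q N ^ 2))⁻¹ • Q N)
        + ∑ i ∈ Finset.range N, lam i • ((v (Q i ^ 2))⁻¹ • Q i))
    (hΦdef : Φ = s M (M + N) • ((u (P M ^ 2))⁻¹ • P M)
        + ∑ i ∈ Finset.range M, mu i • ((u (P i ^ 2))⁻¹ • P i))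
    (hfun : ∀ p, u (Φ * p) = v (Ψ * p)) :
    ∀ n, N + M ≤ n →
      s M (N + M) / u (P M ^ 2) * r N n * u (P (n - N) ^ 2)
        = r N (N + M) / v (Q N ^ 2) * s M n * v (Q (n - M) ^ 2) :=
  key_identity_general N M hN hM u v P Q r s hPmonic hPdeg hQmonic hQdeg hPorth hQorth hrel lam mu Φ
    Ψ hΨdef hΦdef hfun
end

section
/- Let (P_n) be monic orthogonal with respect to a regular functional u with ⟨u,1⟩=1, and define monic polynomials Q_n := P_n + Σ_{i=1}^N r_{i,n} P_{n-i} (case M = 0), where r_{i,n} = 0 for i > n and r_{N,N} ≠ 0. If (Q_n) is also a monic orthogonal polynomial sequence with respect to a regular functional v with ⟨v,1⟩=1, then there exists a unique polynomial Ψ_N of exact degree N such that u = Ψ_N v; moreover Ψ_N = r_{N,N} Q_N/⟨v,Q_N²⟩ + Σ_{i=0}^{N-1} λ_i Q_i/⟨v,Q_i²⟩ for some scalars λ_i. -/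
/-!
In the basis `(Q n)`, which is orthogonal for `v`, a functional `w` with `w (Q j) = 0` for
`j > N` equals `Ψ v` for `Ψ = ∑_{i ≤ N} w(Q i) / v(Q i ^ 2) • Q i`, since both sides
agree on every `Q j`. For `w = u`, orthogonality of `(P n)` against `P 0 = 1` gives `u (P k) = 0` for
`k ≥ 1`, so `u (Q n)` vanishes for `n > N` and equals `r N N` at `n = N`; this makes
`deg Ψ = N`. Uniqueness: if `v (D * p) = 0` for all `p` and `D ≠ 0` has degree `d`, then
`v (D * Q d)` is the leading coefficient of `D` times `v (Q d ^ 2) ≠ 0`.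
-/

open Polynomial

namespace Polynomial

section Ring

variable {R M : Type*} [Ring R] [AddCommGroup M] [Module R M] {Q : ℕ → R[X]}

lemma span_range_eq_top_of_monic (hQmonic : ∀ n, (Q n).Monic) (hQdeg : ∀ n, (Q n).degree = n) :
    Submodule.span R (Set.range Q) = ⊤ :=
  Sequence.span ⟨Q, hQdeg⟩ fun n => (hQmonic n).leadingCoeff ▸ isUnit_one

lemma linearMap_ext_of_monic (hQmonic : ∀ n, (Q n).Monic) (hQdeg : ∀ n, (Q n).degree = n)
    {φ ψ : R[X] →ₗ[R] M} (h : ∀ n, φ (Q n) = ψ (Q n)) : φ = ψ :=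
  LinearMap.ext_on_range (span_range_eq_top_of_monic hQmonic hQdeg) h

end Ring

section CommRing

variable {R : Type*} [CommRing R] {v : R[X] →ₗ[R] R} {Q : ℕ → R[X]}

lemma map_mul_eq_zero_of_degree_lt (hQmonic : ∀ n, (Q n).Monic) (hQdeg : ∀ n, (Q n).degree = n)
    (hQorth : ∀ m n, m ≠ n → v (Q m * Q n) = 0) {p : R[X]} {n : ℕ} (hp : p.degree < n) :
    v (p * Q n) = 0 := by
  have hspan : Submodule.span R (Q '' Set.Iio n) = degreeLT R n :=
    Sequence.span_degreeLT ⟨Q, hQdeg⟩ fun i _ => (hQmonic i).leadingCoeff ▸ isUnit_one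
  have hle : degreeLT R n ≤ LinearMap.ker (v ∘ₗ LinearMap.mulRight R (Q n)) := by
    rw [← hspan, Submodule.span_le]
    rintro _ ⟨i, hi, rfl⟩
    exact hQorth i n (ne_of_lt hi)
  exact hle (mem_degreeLT.mpr hp)

lemma eq_zero_of_forall_map_mul_eq_zero [NoZeroDivisors R] (hQmonic : ∀ n, (Q n).Monic)
    (hQdeg : ∀ n, (Q n).degree = n) (hQorth : ∀ m n, m ≠ n → v (Q m * Q n) = 0)
    (hQreg : ∀ n, v (Q n ^ 2) ≠ 0) {D : R[X]} (hD : ∀ p, v (D * p) = 0) : D = 0 := by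
  by_contra hD0
  set d := D.natDegree
  have hQd : (Q d).degree = D.degree := by rw [hQdeg, degree_eq_natDegree hD0]
  have hlower : (D - C D.leadingCoeff * Q d).degree < d := by
    have hc : D.leadingCoeff ≠ 0 := leadingCoeff_ne_zero.mpr hD0
    have := degree_sub_lt_left (q := C D.leadingCoeff * Q d)
      (by rw [degree_C_mul hc, hQd]) hD0 ((hQmonic d).leadingCoeff_C_mul _).symm
    rwa [degree_eq_natDegree hD0] at this
  have : D.leadingCoeff * v (Q d ^ 2) = 0 := by
    calc D.leadingCoeff * v (Q d ^ 2)
        = v ((D - C D.leadingCoeff * Q d) * Q d) + D.leadingCoeff * v (Q d ^ 2) := by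
          rw [map_mul_eq_zero_of_degree_lt hQmonic hQdeg hQorth hlower, zero_add]
      _ = v (D * Q d) := by
          rw [sub_mul, map_sub, mul_assoc, C_mul', map_smul, sq, smul_eq_mul, sub_add_cancel]
      _ = 0 := hD _
  exact hD0 (leadingCoeff_eq_zero.mp ((mul_eq_zero.mp this).resolve_right (hQreg d)))

end CommRing

section Field

variable {K : Type*} [Field K] {v : K[X] →ₗ[K] K} {Q : ℕ → K[X]}

noncomputable def densityPoly (v w : K[X] →ₗ[K] K) (Q : ℕ → K[X]) (N : ℕ) : K[X] :=
  ∑ i ∈ Finset.range (N + 1), w (Q i) • ((v (Q i ^ 2))⁻¹ • Q i)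

lemma map_densityPoly_mul (hQorth : ∀ m n, m ≠ n → v (Q m * Q n) = 0)
    (hQreg : ∀ n, v (Q n ^ 2) ≠ 0) (w : K[X] →ₗ[K] K) (N j : ℕ) :
    v (densityPoly v w Q N * Q j) = if j ≤ N then w (Q j) else 0 := by
  have hterm : ∀ i, v ((w (Q i) • ((v (Q i ^ 2))⁻¹ • Q i)) * Q j) =
      if i = j then w (Q j) else 0 := by
    intro i
    rw [smul_mul_assoc, smul_mul_assoc, map_smul, map_smul, smul_eq_mul, smul_eq_mul]
    split_ifs with hij
    · rw [hij, ← sq, inv_mul_cancel₀ (hQreg j), mul_one]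
    · rw [hQorth i j hij, mul_zero, mul_zero]
  simp only [densityPoly, Finset.sum_mul, map_sum, hterm, Finset.sum_ite_eq',
    Finset.mem_range, Nat.lt_succ_iff]

lemma map_eq_map_densityPoly_mul (hQmonic : ∀ n, (Q n).Monic) (hQdeg : ∀ n, (Q n).degree = n)
    (hQorth : ∀ m n, m ≠ n → v (Q m * Q n) = 0) (hQreg : ∀ n, v (Q n ^ 2) ≠ 0)
    {w : K[X] →ₗ[K] K} {N : ℕ} (hw : ∀ j, N < j → w (Q j) = 0) (p : K[X]) :
    w p = v (densityPoly v w Q N * p) := by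
  refine LinearMap.congr_fun (linearMap_ext_of_monic hQmonic hQdeg
    (ψ := v ∘ₗ LinearMap.mulLeft K (densityPoly v w Q N)) fun j => ?_) p
  rw [LinearMap.comp_apply, LinearMap.mulLeft_apply, map_densityPoly_mul hQorth hQreg]
  split_ifs with hj
  · rfl
  · exact hw j (not_le.mp hj)

lemma degree_densityPoly (hQdeg : ∀ n, (Q n).degree = n) (hQreg : ∀ n, v (Q n ^ 2) ≠ 0)
    {w : K[X] →ₗ[K] K} {N : ℕ} (hwN : w (Q N) ≠ 0) : (densityPoly v w Q N).degree = N := by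
  have htop : (w (Q N) • ((v (Q N ^ 2))⁻¹ • Q N)).degree = N := by
    rw [smul_smul, smul_eq_C_mul, degree_C_mul (mul_ne_zero hwN (inv_ne_zero (hQreg N))), hQdeg]
  have hlow : ∑ i ∈ Finset.range N, w (Q i) • ((v (Q i ^ 2))⁻¹ • Q i) ∈ degreeLT K N :=
    Submodule.sum_mem _ fun i hi => Submodule.smul_mem _ _ <| Submodule.smul_mem _ _ <|
      mem_degreeLT.mpr <| by rw [hQdeg]; exact_mod_cast Finset.mem_range.mp hi
  rw [densityPoly, Finset.sum_range_succ, degree_add_eq_right_of_degree_lt, htop]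
  exact htop ▸ mem_degreeLT.mp hlow

end Field

end Polynomial

theorem case_M_zero_existence_uniqueness_general
    (N : ℕ) (hN : 1 ≤ N)
    (u v : Polynomial ℂ →ₗ[ℂ] ℂ)
    (P Q : ℕ → Polynomial ℂ) (r : ℕ → ℕ → ℂ)
    (hPmonic : ∀ n, (P n).Monic) (hPdeg : ∀ n, (P n).degree = n)
    (hPorth : ∀ m n, m ≠ n → u (P m * P n) = 0)
    (hQorth : ∀ m n, m ≠ n → v (Q m * Q n) = 0) (hQreg : ∀ n, v (Q n ^ 2) ≠ 0)
    (hQmonic : ∀ n, (Q n).Monic) (hQdeg : ∀ n, (Q n).degree = n)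
    (hu1 : u 1 = 1) (hrNN : r N N ≠ 0)
    (hQdef : ∀ n, Q n = P n + ∑ i ∈ Finset.Icc 1 N, r i n • P (n - i)) :
    ∃ Ψ : Polynomial ℂ, Ψ.degree = (N : ℕ) ∧ (∀ p, u p = v (Ψ * p)) ∧
      (∃ lam : ℕ → ℂ, Ψ = r N N • ((v (Q N ^ 2))⁻¹ • Q N)
          + ∑ i ∈ Finset.range N, lam i • ((v (Q i ^ 2))⁻¹ • Q i)) ∧
      (∀ Ψ' : Polynomial ℂ, (∀ p, u p = v (Ψ' * p)) → Ψ' = Ψ) := by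
  have hP0 : P 0 = 1 := (hPmonic 0).degree_le_zero_iff_eq_one.mp (hPdeg 0).le
  have huP : ∀ k, u (P k) = if k = 0 then 1 else 0 := by
    intro k
    split_ifs with hk
    · rw [hk, hP0, hu1]
    · simpa [hP0] using hPorth k 0 hk
  have huQ : ∀ n, N ≤ n → u (Q n) = if n = N then r N N else 0 := by
    intro n hn
    simp only [hQdef, map_add, map_sum, map_smul, huP, smul_eq_mul]
    have hterm : ∀ i ∈ Finset.Icc 1 N,
        (r i n * if n - i = 0 then 1 else 0) = if n = i then r i n else 0 := by
      intro i hi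
      have := Finset.mem_Icc.mp hi
      split_ifs <;> first | omega | simp
    rw [if_neg (by omega), zero_add, Finset.sum_congr rfl hterm, Finset.sum_ite_eq]
    have hmem : n ∈ Finset.Icc 1 N ↔ n = N := by rw [Finset.mem_Icc]; omega
    simp only [hmem]
    split_ifs with h
    · rw [h]
    · rfl
  have huQN : u (Q N) = r N N := by simpa using huQ N le_rfl
  have hmain := map_eq_map_densityPoly_mul hQmonic hQdeg hQorth hQreg
    fun j hj => (huQ j hj.le).trans (if_neg hj.ne')
  refine ⟨densityPoly v u Q N, degree_densityPoly hQdeg hQreg (huQN ▸ hrNN), hmain,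
    ⟨fun i => u (Q i), ?_⟩, fun Ψ' hΨ' => ?_⟩
  · rw [densityPoly, Finset.sum_range_succ, huQN, add_comm]
  · refine sub_eq_zero.mp <|
      eq_zero_of_forall_map_mul_eq_zero hQmonic hQdeg hQorth hQreg fun p => ?_
    rw [sub_mul, map_sub, ← hΨ', ← hmain, sub_self]

/-- Theorem 2.4 (a) (case M = 0): there is a unique polynomial `Ψ_N` of exact degree
`N` with `u = Ψ_N v`, and it has the stated expansion in the `Q̄_i`. -/
theorem case_M_zero_existence_uniqueness
    (N : ℕ) (hN : 1 ≤ N)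
    (u v : Polynomial ℂ →ₗ[ℂ] ℂ)
    (P Q : ℕ → Polynomial ℂ) (r : ℕ → ℕ → ℂ)
    (hPmonic : ∀ n, (P n).Monic) (hPdeg : ∀ n, (P n).degree = n)
    (hPorth : ∀ m n, m ≠ n → u (P m * P n) = 0) (hPreg : ∀ n, u (P n ^ 2) ≠ 0)
    (hQorth : ∀ m n, m ≠ n → v (Q m * Q n) = 0) (hQreg : ∀ n, v (Q n ^ 2) ≠ 0)
    (hQmonic : ∀ n, (Q n).Monic) (hQdeg : ∀ n, (Q n).degree = n)
    (hu1 : u 1 = 1) (hv1 : v 1 = 1)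
    (hrz : ∀ i n, n < i → r i n = 0) (hrNN : r N N ≠ 0)
    (hQdef : ∀ n, Q n = P n + ∑ i ∈ Finset.Icc 1 N, r i n • P (n - i)) :
    ∃ Ψ : Polynomial ℂ, Ψ.degree = (N : ℕ) ∧ (∀ p, u p = v (Ψ * p)) ∧
      (∃ lam : ℕ → ℂ, Ψ = r N N • ((v (Q N ^ 2))⁻¹ • Q N)
          + ∑ i ∈ Finset.range N, lam i • ((v (Q i ^ 2))⁻¹ • Q i)) ∧
      (∀ Ψ' : Polynomial ℂ, (∀ p, u p = v (Ψ' * p)) → Ψ' = Ψ) :=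
  case_M_zero_existence_uniqueness_general N hN u v P Q r hPmonic hPdeg hPorth hQorth hQreg hQmonic
    hQdeg hu1 hrNN hQdef
end

section
/- Let (P_n) be a monic orthogonal polynomial sequence satisfying P_{n+1}(x) = (x - β_n)P_n(x) - γ_n P_{n-1}(x) with γ_n ≠ 0 for n ≥ 1, and define R_n := P_n + Σ_{i=1}^N r_{i,n} P_{n-i} with r_{i,n} = 0 for i > n and r_{N,n} ≠ 0 for all n ≥ N. Set β*_n := β_n + r_{1,n} - r_{1,n+1} and γ*_n := γ_n + r_{1,n}(β_{n-1} - β*_n) + r_{2,n} - r_{2,n+1}. Then (R_n) satisfies R_{n+1}(x) = (x - β*_n)R_n(x) - γ*_n R_{n-1}(x) with γ*_n ≠ 0 for all n ≥ 1 (hence is a MOPS by Favard's theorem) if and only if γ*_i ≠ 0 for i = 1, …, N and A_{i,n} = 0 for all n ≥ i, 2 ≤ i ≤ N-1, A_{N,n} = 0 for n ≥ N (when N ≥ 2), and A_{N+1,n} = 0 for n ≥ N+1, where A_{i,n} := r_{i+1,n+1} - r_{i+1,n} + r_{i,n}(β*_n - β_{n-i}) + r_{i-1,n-1}γ*_n -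 r_{i-1,n}γ_{n+1-i}, A_{N,n} := r_{N,n}(β*_n - β_{n-N}) + r_{N-1,n-1}γ*_n - r_{N-1,n}γ_{n+1-N}, and A_{N+1,n} := r_{N,n-1}γ*_n - r_{N,n}γ_{n-N}. -/
/-!
Expanding `R_{n+1} - (x - β*_n) R_n + γ*_n R_{n-1}` with the recurrence of `(P_n)` gives
`Σ_{i=1}^{n} A_{i,n} P_{n-i}`: the coefficient of `P_n` vanishes by the choice of `β*_n`,
`A_{1,n} = 0` by the choice of `γ*_n`, and `A_{i,n} = 0` for `i ≥ N + 2` since `r_{i,n} = 0` for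
`i > N`. As `deg P_k = k`, the `P_k` are linearly independent, so the recurrence at `n` holds iff
`A_{i,n} = 0` for all `i ≤ n`. For `n > N`, `A_{N+1,n} = 0` reads
`r_{N,n-1} γ*_n = r_{N,n} γ_{n-N} ≠ 0`, which forces `γ*_n ≠ 0`.
-/

open Polynomial Finset

theorem Finset.add_sum_Icc_eq_sum_range {M : Type*} [AddCommMonoid M] {f : ℕ → M} {N n : ℕ}
    (hfn : ∀ i, n < i → f i = 0) (hfN : ∀ i, N < i → f i = 0) :
    f 0 + ∑ i ∈ Icc 1 N, f i = ∑ i ∈ range (n + 1), f i := by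
  have hN : f 0 + ∑ i ∈ Icc 1 N, f i = ∑ i ∈ range (N + 1), f i := by
    rw [range_eq_Ico, sum_eq_sum_Ico_succ_bot N.succ_pos, ← Finset.Ico_succ_right_eq_Icc]
    rfl
  rw [hN, ← eventually_constant_sum (fun i hi => hfN i hi) (by omega : N + 1 ≤ N + n + 1),
    ← eventually_constant_sum (fun i hi => hfn i hi) (by omega : n + 1 ≤ N + n + 1)]

theorem Polynomial.sum_range_smul_sub_eq_zero_iff {K : Type*} [CommRing K] [IsDomain K]
    {P : ℕ → K[X]} (hP : ∀ k, (P k).degree = k) {m : ℕ} {c : ℕ → K} :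
    ∑ i ∈ range (m + 1), c i • P (m - i) = 0 ↔ ∀ i ≤ m, c i = 0 := by
  refine ⟨fun h i hi => ?_, fun h => sum_eq_zero fun i hi => by
    rw [h i (Nat.lt_succ_iff.mp (mem_range.mp hi)), zero_smul]⟩
  let S : Polynomial.Sequence K := ⟨P, hP⟩
  have hrefl : ∑ k ∈ range (m + 1), c (m - k) • S k = 0 := by
    refine (sum_range_reflect _ (m + 1)).symm.trans (h ▸ sum_congr rfl fun j hj => ?_)
    rw [Nat.add_sub_cancel, Nat.sub_sub_self (Nat.lt_succ_iff.mp (mem_range.mp hj))]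
  have hci := linearIndependent_iff'.mp S.linearIndependent _ _ hrefl (m - i)
    (mem_range.mpr (by omega))
  rwa [Nat.sub_sub_self hi] at hci

theorem forall_Icc_eq_zero_iff {M : Type*} [Zero M] (N : ℕ) {A : ℕ → ℕ → M}
    (hA1 : ∀ n, 1 ≤ n → A 1 n = 0) (hAlarge : ∀ i n, N + 2 ≤ i → A i n = 0) :
    (∀ n, 1 ≤ n → ∀ i ∈ Icc 1 n, A i n = 0) ↔
      ((∀ i n, 2 ≤ i → i ≤ N - 1 → i ≤ n → A i n = 0) ∧
        (2 ≤ N → ∀ n, N ≤ n → A N n = 0) ∧ (∀ n, N + 1 ≤ n → A (N + 1) n = 0)) := by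
  refine ⟨fun h => ⟨fun i n h2 _ hn => h n (by omega) i (mem_Icc.mpr ⟨by omega, hn⟩),
    fun h2 n hn => h n (by omega) N (mem_Icc.mpr ⟨by omega, hn⟩),
    fun n hn => h n (by omega) (N + 1) (mem_Icc.mpr ⟨by omega, hn⟩)⟩,
    fun ⟨hmid, hN, hN1⟩ n _ i hi => ?_⟩
  obtain ⟨hi, hn⟩ := mem_Icc.mp hi
  rcases (by omega : i = 1 ∨ (2 ≤ i ∧ i ≤ N - 1) ∨ (i = N ∧ 2 ≤ N) ∨ i = N + 1 ∨ N + 2 ≤ i)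
    with rfl | ⟨h2, hiN⟩ | ⟨rfl, h2⟩ | rfl | hlarge
  · exact hA1 n hn
  · exact hmid i n h2 hiN hn
  · exact hN h2 n hn
  · exact hN1 n hn
  · exact hAlarge i n hlarge

-- `A_{i,n}`; the paper's `A_{N,n}` and `A_{N+1,n}` are its values once `r_{i,n} = 0` for `i > N`.
def defectCoeff {K : Type*} [CommRing K] (β γ βs γs : ℕ → K) (r : ℕ → ℕ → K) (i n : ℕ) : K :=
  r (i + 1) (n + 1) - r (i + 1) n + r i n * (βs n - β (n - i))
    + r (i - 1) (n - 1) * γs n - r (i - 1) n * γ (n + 1 - i)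

namespace ThreeTermRecurrence

variable {K : Type*} [CommRing K] {β γ βs γs : ℕ → K} {r : ℕ → ℕ → K} {P R : ℕ → K[X]}

theorem degree_eq [IsDomain K] (hP0 : P 0 = 1) (hP1 : P 1 = X - C (β 0))
    (hPrec : ∀ n, 1 ≤ n → P (n + 1) = (X - C (β n)) * P n - C (γ n) * P (n - 1)) (k : ℕ) :
    (P k).degree = k := by
  induction k using Nat.twoStepInduction with
  | zero => simp [hP0]
  | one => simp [hP1]
  | more k hk hk1 =>
    have hlead : ((X - C (β (k + 1))) * P (k + 1)).degree = ↑(k + 2) := by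
      rw [degree_mul, degree_X_sub_C, hk1]
      norm_cast
      omega
    rw [hPrec (k + 1) le_add_self, Nat.add_sub_cancel, degree_sub_eq_left_of_degree_lt, hlead]
    calc (C (γ (k + 1)) * P k).degree ≤ (P k).degree := by
          rw [← smul_eq_C_mul]
          exact degree_smul_le _ _
      _ < _ := by rw [hk, hlead]; exact_mod_cast (by omega : k < k + 2)

theorem X_sub_C_mul_succ
    (hPrec : ∀ n, 1 ≤ n → P (n + 1) = (X - C (β n)) * P n - C (γ n) * P (n - 1)) (b : K) (k : ℕ) :
    (X - C b) * P (k + 1) = P (k + 2) - C (b - β (k + 1)) * P (k + 1) + C (γ (k + 1)) * P k := by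
  rw [hPrec (k + 1) le_add_self, Nat.add_sub_cancel, map_sub]
  ring

theorem X_sub_C_mul_sum_range (hP0 : P 0 = 1) (hP1 : P 1 = X - C (β 0))
    (hPrec : ∀ n, 1 ≤ n → P (n + 1) = (X - C (β n)) * P n - C (γ n) * P (n - 1))
    (b : K) (c : ℕ → K) (m : ℕ) :
    (X - C b) * ∑ i ∈ range (m + 2), c i • P (m + 1 - i) =
      ∑ i ∈ range (m + 2), c i • P (m + 2 - i)
      - ∑ i ∈ range (m + 2), (c i * (b - β (m + 1 - i))) • P (m + 1 - i)
      + ∑ i ∈ range (m + 1), (c i * γ (m + 1 - i)) • P (m - i) := by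
  have hterm : ∀ i ∈ range (m + 1), (X - C b) * (c i • P (m + 1 - i)) =
      c i • P (m + 2 - i) - (c i * (b - β (m + 1 - i))) • P (m + 1 - i)
        + (c i * γ (m + 1 - i)) • P (m - i) := by
    intro i hi
    have hk := X_sub_C_mul_succ hPrec b (m - i)
    rw [show m - i + 1 = m + 1 - i by simp at hi; omega,
      show m - i + 2 = m + 2 - i by simp at hi; omega] at hk
    simp only [smul_eq_C_mul, map_mul, mul_left_comm _ (C (c i)), hk]
    ring
  rw [mul_sum, sum_range_succ _ (m + 1), sum_congr rfl hterm, sum_range_succ _ (m + 1),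
    sum_range_succ _ (m + 1)]
  simp only [Nat.sub_self, show m + 2 - (m + 1) = 1 by omega, hP0, hP1, sum_add_distrib,
    sum_sub_distrib, smul_eq_C_mul, map_mul, map_sub]
  ring

theorem defect_eq_sum (hP0 : P 0 = 1) (hP1 : P 1 = X - C (β 0))
    (hPrec : ∀ n, 1 ≤ n → P (n + 1) = (X - C (β n)) * P n - C (γ n) * P (n - 1))
    {ρ : ℕ → ℕ → K} (hρ0 : ∀ n, ρ 0 n = 1) (hρ : ∀ i n, n < i → ρ i n = 0)
    {Q : ℕ → K[X]} (hQ : ∀ n, Q n = ∑ i ∈ range (n + 1), ρ i n • P (n - i)) (b g : K) (m : ℕ) :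
    Q (m + 2) - (X - C b) * Q (m + 1) + C g * Q m =
      (ρ 1 (m + 2) - ρ 1 (m + 1) + b - β (m + 1)) • P (m + 1)
      + ∑ i ∈ range (m + 1), (ρ (i + 2) (m + 2) - ρ (i + 2) (m + 1)
          + ρ (i + 1) (m + 1) * (b - β (m - i)) + ρ i m * g
          - ρ i (m + 1) * γ (m + 1 - i)) • P (m - i) := by
  have hext : ∑ i ∈ range (m + 2), ρ i (m + 1) • P (m + 2 - i)
      = ∑ i ∈ range (m + 3), ρ i (m + 1) • P (m + 2 - i) := by
    rw [sum_range_succ _ (m + 2), hρ _ _ (by omega), zero_smul, add_zero]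
  have hg : C g * Q m = ∑ i ∈ range (m + 1), (ρ i m * g) • P (m - i) := by
    rw [hQ, mul_sum]
    exact sum_congr rfl fun i _ => by rw [smul_eq_C_mul, smul_eq_C_mul, map_mul]; ring
  rw [hg, hQ, hQ, X_sub_C_mul_sum_range hP0 hP1 hPrec, hext, sum_range_succ' _ (m + 2),
    sum_range_succ' _ (m + 1), sum_range_succ' _ (m + 2), sum_range_succ' _ (m + 1),
    sum_range_succ' _ (m + 1)]
  simp only [add_smul, sub_smul, sum_add_distrib, sum_sub_distrib, Nat.add_sub_add_right,
    Nat.sub_zero, add_assoc, Nat.reduceAdd, hρ0, one_mul, one_smul, show m + 2 - 1 = m + 1 from rfl]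
  abel

theorem defectCoeff_one (hr0 : ∀ n, r 0 n = 1)
    (hγs : ∀ n, 1 ≤ n → γs n = γ n + r 1 n * (β (n - 1) - βs n) + r 2 n - r 2 (n + 1))
    {n : ℕ} (hn : 1 ≤ n) : defectCoeff β γ βs γs r 1 n = 0 := by
  rw [defectCoeff, hγs n hn, hr0, hr0, Nat.add_sub_cancel]
  ring

theorem defectCoeff_of_add_two_le {N : ℕ} (hrN : ∀ i n, N < i → r i n = 0) {i : ℕ}
    (hi : N + 2 ≤ i) (n : ℕ) : defectCoeff β γ βs γs r i n = 0 := by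
  rw [defectCoeff, hrN (i + 1) _ (by omega), hrN (i + 1) _ (by omega), hrN i _ (by omega),
    hrN (i - 1) _ (by omega), hrN (i - 1) _ (by omega)]
  ring

theorem ne_zero_of_defectCoeff_eq_zero [NoZeroDivisors K] {N : ℕ} (hγ : ∀ n, 1 ≤ n → γ n ≠ 0)
    (hrN : ∀ i n, N < i → r i n = 0) (hrNne : ∀ n, N ≤ n → r N n ≠ 0) {n : ℕ} (hn : N < n)
    (hA : defectCoeff β γ βs γs r (N + 1) n = 0) : γs n ≠ 0 := by
  intro hγs0
  rw [defectCoeff, hrN _ _ (by omega), hrN _ _ (by omega), hrN (N + 1) n (by omega), hγs0,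
    Nat.add_sub_cancel, Nat.add_sub_add_right] at hA
  exact mul_ne_zero (hrNne n hn.le) (hγ (n - N) (by omega)) (by linear_combination -hA)

theorem recurrence_zero (hP0 : P 0 = 1) (hP1 : P 1 = X - C (β 0)) (hr0 : ∀ n, r 0 n = 1)
    (hrz : ∀ i n, n < i → r i n = 0) (hR : ∀ n, R n = ∑ i ∈ range (n + 1), r i n • P (n - i))
    (hβs : ∀ n, βs n = β n + r 1 n - r 1 (n + 1)) :
    R 1 = (X - C (βs 0)) * R 0 := by
  simp only [hR, sum_range_succ, range_zero, sum_empty, hr0, hβs 0, hrz 1 0 one_pos, hP0, hP1,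
    Nat.sub_zero, Nat.sub_self, smul_eq_C_mul, map_sub, map_add, map_zero, map_one]
  ring

theorem recurrence_iff [IsDomain K] (hP0 : P 0 = 1) (hP1 : P 1 = X - C (β 0))
    (hPrec : ∀ n, 1 ≤ n → P (n + 1) = (X - C (β n)) * P n - C (γ n) * P (n - 1))
    (hr0 : ∀ n, r 0 n = 1) (hrz : ∀ i n, n < i → r i n = 0)
    (hR : ∀ n, R n = ∑ i ∈ range (n + 1), r i n • P (n - i))
    (hβs : ∀ n, βs n = β n + r 1 n - r 1 (n + 1)) {n : ℕ} (hn : 1 ≤ n) :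
    R (n + 1) = (X - C (βs n)) * R n - C (γs n) * R (n - 1) ↔
      ∀ i ∈ Icc 1 n, defectCoeff β γ βs γs r i n = 0 := by
  obtain ⟨m, rfl⟩ := Nat.exists_eq_add_of_le' hn
  have hcoeff : r 1 (m + 2) - r 1 (m + 1) + βs (m + 1) - β (m + 1) = 0 := by
    rw [hβs]
    ring
  have hdefect : R (m + 2) - (X - C (βs (m + 1))) * R (m + 1) + C (γs (m + 1)) * R m =
      ∑ i ∈ range (m + 1), defectCoeff β γ βs γs r (i + 1) (m + 1) • P (m - i) := by
    rw [defect_eq_sum hP0 hP1 hPrec hr0 hrz hR, hcoeff, zero_smul, zero_add]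
    refine sum_congr rfl fun i _ => ?_
    simp only [defectCoeff, Nat.add_sub_cancel, Nat.add_sub_add_right, add_assoc, Nat.reduceAdd,
      show m + 2 - (i + 1) = m + 1 - i by omega]
  rw [← sub_eq_zero, sub_sub_eq_add_sub, add_sub_right_comm, Nat.add_sub_cancel, hdefect,
    sum_range_smul_sub_eq_zero_iff (degree_eq hP0 hP1 hPrec)]
  refine ⟨fun h i hi => ?_, fun h i hi => h (i + 1) (mem_Icc.mpr ⟨le_add_self, by omega⟩)⟩
  obtain ⟨j, rfl⟩ := Nat.exists_eq_add_of_le' (mem_Icc.mp hi).1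
  exact h j (by simp at hi; omega)

end ThreeTermRecurrence

open ThreeTermRecurrence

theorem orthogonality_characterization_Rn_general
    (N : ℕ)
    (β γ βs γs : ℕ → ℂ) (r : ℕ → ℕ → ℂ)
    (P R : ℕ → Polynomial ℂ)
    (hP0 : P 0 = 1) (hP1 : P 1 = X - C (β 0))
    (hPrec : ∀ n, 1 ≤ n → P (n + 1) = (X - C (β n)) * P n - C (γ n) * P (n - 1))
    (hγ : ∀ n, 1 ≤ n → γ n ≠ 0)
    (hr0 : ∀ n, r 0 n = 1)
    (hrz : ∀ i n, n < i → r i n = 0)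
    (hrN : ∀ i n, N < i → r i n = 0)
    (hrNne : ∀ n, N ≤ n → r N n ≠ 0)
    (hR : ∀ n, R n = P n + ∑ i ∈ Finset.Icc 1 N, r i n • P (n - i))
    (hβs : ∀ n, βs n = β n + r 1 n - r 1 (n + 1))
    (hγs : ∀ n, 1 ≤ n → γs n = γ n + r 1 n * (β (n - 1) - βs n) + r 2 n - r 2 (n + 1))
    (A : ℕ → ℕ → ℂ)
    (hA : ∀ i n, A i n = r (i + 1) (n + 1) - r (i + 1) n + r i n * (βs n - β (n - i))
        + r (i - 1) (n - 1) * γs n - r (i - 1) n * γ (n + 1 - i)) :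
    ((R 1 = (X - C (βs 0)) * R 0 ∧
        (∀ n, 1 ≤ n → R (n + 1) = (X - C (βs n)) * R n - C (γs n) * R (n - 1))) ∧
      (∀ n, 1 ≤ n → γs n ≠ 0))
    ↔ ((∀ i ∈ Finset.Icc 1 N, γs i ≠ 0) ∧
       (∀ i n, 2 ≤ i → i ≤ N - 1 → i ≤ n → A i n = 0) ∧
       (2 ≤ N → ∀ n, N ≤ n → A N n = 0) ∧
       (∀ n, N + 1 ≤ n → A (N + 1) n = 0)) := by
  obtain rfl : A = defectCoeff β γ βs γs r := funext₂ hA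
  have hRsum (n : ℕ) : R n = ∑ i ∈ range (n + 1), r i n • P (n - i) := by
    rw [hR, ← add_sum_Icc_eq_sum_range (fun i hi => by rw [hrz i n hi, zero_smul])
      (fun i hi => by rw [hrN i n hi, zero_smul]), hr0, one_smul, Nat.sub_zero]
  rw [and_iff_right (recurrence_zero hP0 hP1 hr0 hrz hRsum hβs),
    forall₂_congr fun (n : ℕ) (hn : 1 ≤ n) => recurrence_iff hP0 hP1 hPrec hr0 hrz hRsum hβs hn,
    forall_Icc_eq_zero_iff N (fun n => defectCoeff_one hr0 hγs)
      (fun i n hi => defectCoeff_of_add_two_le hrN hi n)]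
  constructor
  · rintro ⟨hdefect, hγs_ne⟩
    exact ⟨fun i hi => hγs_ne i (mem_Icc.mp hi).1, hdefect⟩
  · rintro ⟨hγsN, hdefect⟩
    refine ⟨hdefect, fun n hn => ?_⟩
    rcases le_or_gt n N with hnN | hNn
    · exact hγsN n (mem_Icc.mpr ⟨hn, hnN⟩)
    · exact ne_zero_of_defectCoeff_eq_zero hγ hrN hrNne hNn (hdefect.2.2 n hNn)

/-- Proposition 3.1: characterization of the orthogonality (three-term recurrence with
nonvanishing `γ*_n`) of the sequence `R_n = P_n + Σ_{i=1}^N r_{i,n} P_{n-i}`. -/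
theorem orthogonality_characterization_Rn
    (N : ℕ) (hN : 1 ≤ N)
    (β γ βs γs : ℕ → ℂ) (r : ℕ → ℕ → ℂ)
    (P R : ℕ → Polynomial ℂ)
    (hP0 : P 0 = 1) (hP1 : P 1 = X - C (β 0))
    (hPrec : ∀ n, 1 ≤ n → P (n + 1) = (X - C (β n)) * P n - C (γ n) * P (n - 1))
    (hγ : ∀ n, 1 ≤ n → γ n ≠ 0)
    (hr0 : ∀ n, r 0 n = 1)
    (hrz : ∀ i n, n < i → r i n = 0)
    (hrN : ∀ i n, N < i → r i n = 0)
    (hrNne : ∀ n, N ≤ n → r N n ≠ 0)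
    (hR : ∀ n, R n = P n + ∑ i ∈ Finset.Icc 1 N, r i n • P (n - i))
    (hβs : ∀ n, βs n = β n + r 1 n - r 1 (n + 1))
    (hγs : ∀ n, 1 ≤ n → γs n = γ n + r 1 n * (β (n - 1) - βs n) + r 2 n - r 2 (n + 1))
    (A : ℕ → ℕ → ℂ)
    (hA : ∀ i n, A i n = r (i + 1) (n + 1) - r (i + 1) n + r i n * (βs n - β (n - i))
        + r (i - 1) (n - 1) * γs n - r (i - 1) n * γ (n + 1 - i)) :
    ((R 1 = (X - C (βs 0)) * R 0 ∧
        (∀ n, 1 ≤ n → R (n + 1) = (X - C (βs n)) * R n - C (γs n) * R (n - 1))) ∧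
      (∀ n, 1 ≤ n → γs n ≠ 0))
    ↔ ((∀ i ∈ Finset.Icc 1 N, γs i ≠ 0) ∧
       (∀ i n, 2 ≤ i → i ≤ N - 1 → i ≤ n → A i n = 0) ∧
       (2 ≤ N → ∀ n, N ≤ n → A N n = 0) ∧
       (∀ n, N + 1 ≤ n → A (N + 1) n = 0)) :=
  orthogonality_characterization_Rn_general N β γ βs γs r P R hP0 hP1 hPrec hγ hr0 hrz hrN hrNne hR
    hβs hγs A hA
end

section
/- Let (P_n) be monic orthogonal with respect to u, and (Q_n) monic polynomials. Suppose the polynomial identity Σ_{i=2}^{M-1} B_i Q_{n-i} + B_M Q_{n-M} + B_{M+1} Q_{n-(M+1)} = -[Σ_{i=2}^{N-1} A_i P_{n-i} + A_N P_{n-N} + A_{N+1} P_{n-(N+1)}] holds for some fixed n ≥ N+M+1 and scalars A_i, B_i. If the M×M matrix B̃ᵀ_{n-2} with entries ⟨P̄_j u, Q_{n-i}⟩ (j = 0,…,M-1; i = 2,…,M+1) is invertible, then B_i = 0 for all i = 2,…,M+1, and consequently Σ_{i=2}^{N-1} A_i P_{n-i} + A_N P_{n-N} + A_{N+1} P_{n-(N+1)}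 = 0, which forces A_i = 0 for all i = 2,…,N+1 since (P_n) is a basis. -/
open Polynomial

/-- The linear-algebra step in the proof of Theorem 3.3: if the combination
`Σ B_i Q_{n-i} = -Σ A_i P_{n-i}` holds for a fixed `n ≥ N+M+1` and the matrix
`B̃ᵀ_{n-2}` is invertible, then all `B_i` vanish, and consequently all `A_i` vanish. -/
theorem B_and_A_vanish
    (N M : ℕ) (hN : 1 ≤ N) (hM : 1 ≤ M)
    (u : Polynomial ℂ →ₗ[ℂ] ℂ)
    (P Q : ℕ → Polynomial ℂ)
    (hPmonic : ∀ n, (P n).Monic) (hPdeg : ∀ n, (P n).degree = n)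
    (hPorth : ∀ m n, m ≠ n → u (P m * P n) = 0) (hPreg : ∀ n, u (P n ^ 2) ≠ 0)
    (hQmonic : ∀ n, (Q n).Monic) (hQdeg : ∀ n, (Q n).degree = n)
    (n : ℕ) (hn : N + M + 1 ≤ n)
    (A B : ℕ → ℂ)
    (hid : ∑ i ∈ Finset.Icc 2 (M + 1), B i • Q (n - i)
        = -∑ i ∈ Finset.Icc 2 (N + 1), A i • P (n - i))
    (Bt : Matrix (Fin M) (Fin M) ℂ)
    (hBt : ∀ j i : Fin M, Bt j i
        = u (P (j : ℕ) * Q (n - ((i : ℕ) + 2))) / u (P (j : ℕ) ^ 2))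
    (hinv : IsUnit Bt.det) :
    (∀ i ∈ Finset.Icc 2 (M + 1), B i = 0) ∧
    (∑ i ∈ Finset.Icc 2 (N + 1), A i • P (n - i) = 0) ∧
    (∀ i ∈ Finset.Icc 2 (N + 1), A i = 0) := by
  -- Step 1: all B i vanish.
  have hB : ∀ i ∈ Finset.Icc 2 (M + 1), B i = 0 := by
    set v : Fin M → ℂ := fun i => B ((i : ℕ) + 2) with hv
    have hmv : Bt.mulVec v = 0 := by
      funext j
      -- apply u (P j * ·) to the identity
      have happ : u (P (j : ℕ) * ∑ i ∈ Finset.Icc 2 (M + 1), B i • Q (n - i))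
          = u (P (j : ℕ) * (-∑ i ∈ Finset.Icc 2 (N + 1), A i • P (n - i))) := by
        rw [hid]
      have hRHS : u (P (j : ℕ) * (-∑ i ∈ Finset.Icc 2 (N + 1), A i • P (n - i))) = 0 := by
        rw [mul_neg, Finset.mul_sum, map_neg, map_sum]
        have : ∀ i ∈ Finset.Icc 2 (N + 1), u (P (j : ℕ) * (A i • P (n - i))) = 0 := by
          intro i hi
          rw [Finset.mem_Icc] at hi
          have hne : (j : ℕ) ≠ n - i := by
            have : M ≤ n - i := by omega
            have := j.isLt
            omega
          rw [mul_smul_comm, map_smul, hPorth _ _ hne, smul_zero]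
        rw [Finset.sum_congr rfl this, Finset.sum_const_zero, neg_zero]
      have hLHS : u (P (j : ℕ) * ∑ i ∈ Finset.Icc 2 (M + 1), B i • Q (n - i))
          = ∑ i ∈ Finset.Icc 2 (M + 1), B i * u (P (j : ℕ) * Q (n - i)) := by
        rw [Finset.mul_sum, map_sum]
        refine Finset.sum_congr rfl fun i hi => ?_
        rw [mul_smul_comm, map_smul, smul_eq_mul]
      have key : ∑ i ∈ Finset.Icc 2 (M + 1), B i * u (P (j : ℕ) * Q (n - i)) = 0 := by
        rw [← hLHS, happ, hRHS]
      have keyF : ∑ i : Fin M, B ((i : ℕ) + 2) * u (P (j : ℕ) * Q (n - ((i : ℕ) + 2))) = 0 := by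
        rw [Fin.sum_univ_eq_sum_range (fun i => B (i + 2) * u (P (j : ℕ) * Q (n - (i + 2))))]
        rw [show Finset.Icc 2 (M + 1) = Finset.Ico 2 (M + 2) from by exact (Finset.Ico_add_one_right_eq_Icc 2 (M + 1)).symm,
          Finset.sum_Ico_eq_sum_range] at key
        have hM1 : M + 2 - 2 = M := by omega
        rw [hM1] at key
        rw [← key]
        exact Finset.sum_congr rfl fun i _ => by rw [add_comm 2 i]
      show (Bt.mulVec v) j = 0
      rw [Matrix.mulVec]
      simp only [dotProduct, hBt, hv]
      have : ∀ i : Fin M,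
          u (P (j : ℕ) * Q (n - ((i : ℕ) + 2))) / u (P (j : ℕ) ^ 2) * B ((i : ℕ) + 2)
          = (u (P (j : ℕ) ^ 2))⁻¹ * (B ((i : ℕ) + 2) * u (P (j : ℕ) * Q (n - ((i : ℕ) + 2)))) := by
        intro i; field_simp
      rw [Finset.sum_congr rfl fun i _ => this i, ← Finset.mul_sum, keyF, mul_zero]
    have hinj : Function.Injective Bt.mulVec :=
      Matrix.mulVec_injective_iff_isUnit.mpr ((Matrix.isUnit_iff_isUnit_det Bt).mpr hinv)
    have hv0 : v = 0 := by
      apply hinj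
      rw [hmv, Matrix.mulVec_zero]
    intro i hi
    rw [Finset.mem_Icc] at hi
    have : B (((⟨i - 2, by omega⟩ : Fin M) : ℕ) + 2) = 0 := congrFun hv0 _
    simpa [Nat.sub_add_cancel hi.1] using this
  refine ⟨hB, ?_, ?_⟩
  · have : ∑ i ∈ Finset.Icc 2 (M + 1), B i • Q (n - i) = 0 := by
      refine Finset.sum_eq_zero fun i hi => ?_
      rw [hB i hi, zero_smul]
    rw [this, eq_comm, neg_eq_zero] at hid
    exact hid
  · have hsum : ∑ i ∈ Finset.Icc 2 (N + 1), A i • P (n - i) = 0 := by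
      have : ∑ i ∈ Finset.Icc 2 (M + 1), B i • Q (n - i) = 0 := by
        refine Finset.sum_eq_zero fun i hi => ?_
        rw [hB i hi, zero_smul]
      rw [this, eq_comm, neg_eq_zero] at hid
      exact hid
    intro k hk
    rw [Finset.mem_Icc] at hk
    have happ : u (P (n - k) * ∑ i ∈ Finset.Icc 2 (N + 1), A i • P (n - i)) = 0 := by
      rw [hsum, mul_zero, map_zero]
    rw [Finset.mul_sum, map_sum] at happ
    have hterm : ∀ i ∈ Finset.Icc 2 (N + 1), i ≠ k →
        u (P (n - k) * (A i • P (n - i))) = 0 := by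
      intro i hi hik
      rw [Finset.mem_Icc] at hi
      have hne : n - k ≠ n - i := by omega
      rw [mul_smul_comm, map_smul, hPorth _ _ hne, smul_zero]
    rw [Finset.sum_eq_single_of_mem k (Finset.mem_Icc.mpr hk)
      (fun i hi hik => hterm i hi hik)] at happ
    rw [mul_smul_comm, map_smul, smul_eq_mul, ← sq] at happ
    exact (mul_eq_zero.mp happ).resolve_right (hPreg _)
end

section
/- Let (P_n) be a MOPS with respect to u, and define Q_n := P_n + Σ_{i=1}^N r_{i,n}P_{n-i} with r_{N,N} ≠ 0 (case M = 0). Then ⟨u, Q_n⟩ = 0 for all n ≥ N+1, and ⟨u, Q_N⟩ = r_{N,N} ≠ 0; consequently, if (Q_n) is a MOPS with respect to a regular functional v, then u = Σ_{n=0}^N ⟨u, Q_n⟩ · (Q_n/⟨v,Q_n²⟩) v, which is of the form u = Ψ_N v with Ψ_N of exact degree N. -/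
open Polynomial

/-!
Since `P 0 = 1`, orthogonality gives `⟨u, P k⟩ = 0` for `k ≥ 1`, so `⟨u, Q n⟩` only sees the
summand `r n n • P 0`, which is absent for `n > N` and equals `r N N` for `n = N`. Both `u` and
`p ↦ ⟨v, Ψ_N p⟩` are linear and the `Q n` form a basis of `ℂ[X]`, so it suffices to compare them
on each `Q m`, where orthogonality of `(Q n)` with respect to `v` leaves a single term of `Ψ_N`.
-/

namespace Polynomial

variable {K : Type*} [Field K]

theorem linearMap_ext_of_degree_eq {M : Type*} [AddCommGroup M] [Module K M]
    {f g : K[X] →ₗ[K] M} {Q : ℕ → K[X]} (hQdeg : ∀ n, (Q n).degree = n)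
    (h : ∀ n, f (Q n) = g (Q n)) : f = g :=
  let S : Sequence K := ⟨Q, hQdeg⟩
  LinearMap.ext_on_range (S.span fun n => (leadingCoeff_ne_zero.mpr (S.ne_zero n)).isUnit) h

theorem degree_sum_range_smul_of_degree_eq {Q : ℕ → K[X]} (hQdeg : ∀ n, (Q n).degree = n)
    {c : ℕ → K} {N : ℕ} (hc : c N ≠ 0) :
    (∑ n ∈ Finset.range (N + 1), c n • Q n).degree = N := by
  have hlow : ∑ n ∈ Finset.range N, c n • Q n ∈ degreeLT K N :=
    Submodule.sum_mem _ fun n hn => Submodule.smul_mem _ _ <| mem_degreeLT.mpr <| by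
      rw [hQdeg]; exact_mod_cast Finset.mem_range.mp hn
  have htop : (c N • Q N).degree = N := by
    rw [smul_eq_C_mul, degree_C_mul hc, hQdeg]
  rw [Finset.sum_range_succ, degree_add_eq_right_of_degree_lt (htop ▸ mem_degreeLT.mp hlow), htop]

section Orthogonal

variable {Q : ℕ → K[X]} {v : K[X] →ₗ[K] K}

/-- `Q n v / ⟨v, Q n ^ 2⟩` is the basis dual to `(Q n)`; this is the expansion of `w` in it. -/
theorem apply_eq_apply_mul_sum_of_orthogonal (hQdeg : ∀ n, (Q n).degree = n)
    (hQorth : ∀ m n, m ≠ n → v (Q m * Q n) = 0) (hQreg : ∀ n, v (Q n ^ 2) ≠ 0)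
    {N : ℕ} (w : K[X] →ₗ[K] K) (hw : ∀ n, N < n → w (Q n) = 0) (p : K[X]) :
    w p = v ((∑ n ∈ Finset.range (N + 1), (w (Q n) / v (Q n ^ 2)) • Q n) * p) := by
  set Ψ := ∑ n ∈ Finset.range (N + 1), (w (Q n) / v (Q n ^ 2)) • Q n
  suffices w = v ∘ₗ LinearMap.mulLeft K Ψ from LinearMap.congr_fun this p
  refine linearMap_ext_of_degree_eq hQdeg fun m => ?_
  simp only [Ψ, LinearMap.comp_apply, LinearMap.mulLeft_apply, Finset.sum_mul, map_sum,
    smul_mul_assoc, map_smul, smul_eq_mul]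
  rw [Finset.sum_eq_single m (fun n _ hnm => by rw [hQorth n m hnm, mul_zero])
    (fun hm => by rw [hw m (by simpa using hm), zero_div, zero_mul]), ← sq,
    div_mul_cancel₀ _ (hQreg m)]

end Orthogonal

section Perturbation

variable {u : K[X] →ₗ[K] K} {P : ℕ → K[X]}

theorem apply_eq_zero_of_orthogonal (hP0 : P 0 = 1)
    (hPorth : ∀ m n, m ≠ n → u (P m * P n) = 0) {n : ℕ} (hn : n ≠ 0) : u (P n) = 0 := by
  simpa [hP0] using hPorth 0 n hn.symm

theorem apply_add_sum_smul_eq_zero (hP0 : P 0 = 1)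
    (hPorth : ∀ m n, m ≠ n → u (P m * P n) = 0) (r : ℕ → ℕ → K) {N n : ℕ} (hn : N < n) :
    u (P n + ∑ i ∈ Finset.Icc 1 N, r i n • P (n - i)) = 0 := by
  rw [map_add, map_sum, apply_eq_zero_of_orthogonal hP0 hPorth (by omega : n ≠ 0), zero_add]
  refine Finset.sum_eq_zero fun i hi => ?_
  rw [map_smul, apply_eq_zero_of_orthogonal hP0 hPorth (by grind), smul_zero]

theorem apply_add_sum_smul_self (hP0 : P 0 = 1)
    (hPorth : ∀ m n, m ≠ n → u (P m * P n) = 0) (r : ℕ → ℕ → K) {N : ℕ} (hN : 1 ≤ N)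
    (hu1 : u 1 = 1) :
    u (P N + ∑ i ∈ Finset.Icc 1 N, r i N • P (N - i)) = r N N := by
  rw [map_add, map_sum, apply_eq_zero_of_orthogonal hP0 hPorth (by omega : N ≠ 0), zero_add,
    Finset.sum_eq_single_of_mem N (by simp [hN])
      (fun i hi hiN => by rw [map_smul, apply_eq_zero_of_orthogonal hP0 hPorth (by grind),
        smul_zero]),
    map_smul, Nat.sub_self, hP0, hu1, smul_eq_mul, mul_one]

end Perturbation

end Polynomial

theorem case_M_zero_functional_relation_general
    (N : ℕ) (hN : 1 ≤ N)
    (u v : Polynomial ℂ →ₗ[ℂ] ℂ)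
    (P Q : ℕ → Polynomial ℂ) (r : ℕ → ℕ → ℂ)
    (hPmonic : ∀ n, (P n).Monic) (hPdeg : ∀ n, (P n).degree = n)
    (hPorth : ∀ m n, m ≠ n → u (P m * P n) = 0)
    (hu1 : u 1 = 1)
    (hQdeg : ∀ n, (Q n).degree = n)
    (hQorth : ∀ m n, m ≠ n → v (Q m * Q n) = 0) (hQreg : ∀ n, v (Q n ^ 2) ≠ 0)
    (hrNN : r N N ≠ 0)
    (hQdef : ∀ n, Q n = P n + ∑ i ∈ Finset.Icc 1 N, r i n • P (n - i)) :
    (∀ n, N + 1 ≤ n → u (Q n) = 0) ∧ u (Q N) = r N N ∧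
      (∀ p, u p
        = v ((∑ n ∈ Finset.range (N + 1), (u (Q n) / v (Q n ^ 2)) • Q n) * p)) ∧
      (∑ n ∈ Finset.range (N + 1), (u (Q n) / v (Q n ^ 2)) • Q n).degree = (N : ℕ) := by
  have hP0 : P 0 = 1 := (hPmonic 0).degree_le_zero_iff_eq_one.mp (hPdeg 0).le
  have huQ : ∀ n, N + 1 ≤ n → u (Q n) = 0 := fun n hn => by
    rw [hQdef]; exact apply_add_sum_smul_eq_zero hP0 hPorth r hn
  have huQN : u (Q N) = r N N := by
    rw [hQdef]; exact apply_add_sum_smul_self hP0 hPorth r hN hu1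
  refine ⟨huQ, huQN, apply_eq_apply_mul_sum_of_orthogonal hQdeg hQorth hQreg u huQ,
    degree_sum_range_smul_of_degree_eq hQdeg ?_⟩
  rw [huQN]
  exact div_ne_zero hrNN (hQreg N)

/-- Case M = 0: `⟨u, Q_n⟩ = 0` for `n ≥ N+1`, `⟨u, Q_N⟩ = r_{N,N} ≠ 0`, and if `(Q_n)`
is a MOPS with respect to `v` then `u = Ψ_N v` with
`Ψ_N = Σ_{n=0}^N ⟨u,Q_n⟩ Q_n/⟨v,Q_n²⟩` of exact degree `N`. -/
theorem case_M_zero_functional_relation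
    (N : ℕ) (hN : 1 ≤ N)
    (u v : Polynomial ℂ →ₗ[ℂ] ℂ)
    (P Q : ℕ → Polynomial ℂ) (r : ℕ → ℕ → ℂ)
    (hPmonic : ∀ n, (P n).Monic) (hPdeg : ∀ n, (P n).degree = n)
    (hPorth : ∀ m n, m ≠ n → u (P m * P n) = 0) (hPreg : ∀ n, u (P n ^ 2) ≠ 0)
    (hu1 : u 1 = 1)
    (hQmonic : ∀ n, (Q n).Monic) (hQdeg : ∀ n, (Q n).degree = n)
    (hQorth : ∀ m n, m ≠ n → v (Q m * Q n) = 0) (hQreg : ∀ n, v (Q n ^ 2) ≠ 0)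
    (hrz : ∀ i n, n < i → r i n = 0) (hrNN : r N N ≠ 0)
    (hQdef : ∀ n, Q n = P n + ∑ i ∈ Finset.Icc 1 N, r i n • P (n - i)) :
    (∀ n, N + 1 ≤ n → u (Q n) = 0) ∧ u (Q N) = r N N ∧
      (∀ p, u p
        = v ((∑ n ∈ Finset.range (N + 1), (u (Q n) / v (Q n ^ 2)) • Q n) * p)) ∧
      (∑ n ∈ Finset.range (N + 1), (u (Q n) / v (Q n ^ 2)) • Q n).degree = (N : ℕ) :=
  case_M_zero_functional_relation_general N hN u v P Q r hPmonic hPdeg hPorth hu1 hQdeg hQorth hQreg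
    hrNN hQdef
end
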